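/- (a) For any 𝒱-measurable h ∈ L²(P) such that hQ is integrable and all displayed quantities lie in L²(P), the element E[h | ℋ] − E[h | 𝒱₋] − E[hQ | 𝒱₋]·W•·ε belongs to Γ̃₄ and its difference from h is orthogonal in L²(P) to every element of Γ̃₄; that is, it is the orthogonal projection of h onto Γ̃₄. (b) If h ∈ L²(P) is 𝒱₋-measurable, then h is orthogonal to every element of Γ̃₄, i.e., its orthogonal projection onto Γ̃₄ is 0. -/

import Mathlib

/-!
Write `s := T⁻¹·W·σ`, so that `ε = s + Q`. All the proof needs about `s` is `s ∈ L²`,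
`E[s | 𝒱] = 0` and `E[s² | 𝒱₋] = T•`.

An element of `Γ̃₄` has the form `f = A − c·s` with `A` `ℋ`-measurable and `c` `𝒱₋`-measurable.
Since `E[s | ℋ] = 0`, the two parts are orthogonal on each `{|c| ≤ n}`, so by truncation both
lie in `L²` once `f` does. Then `E[f | 𝒱₋] = 0`, which gives (b), and
`E[ε·f | 𝒱₋] = E[Q·A | 𝒱₋] − c·T• = 0` by the choice of `c`. Splitting
`h − proj = (h − E[h | ℋ]) + E[h | 𝒱₋] + e·ε` with `e := E[hQ | 𝒱₋]·W•` gives the orthogonality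
in (a). Finally `proj = A₀ − e·s` with `A₀ := E[h | ℋ] − E[h | 𝒱₋] − e·Q`, and
`E[Q·A₀ | 𝒱₋] = E[hQ | 𝒱₋] − e·E[Q² | 𝒱₋] = e·T•` because `E[ε² | 𝒱₋] = T• + E[Q² | 𝒱₋]`;
so `proj ∈ Γ̃₄`.
-/

open MeasureTheory

variable {Ω : Type*}

/-- `W := (E[σ² | 𝒱])⁻¹`. -/
noncomputable def Wfun {m0 : MeasurableSpace Ω} (μ : Measure Ω) (mV : MeasurableSpace Ω)
    (σ : Ω → ℝ) : Ω → ℝ :=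
  fun ω => ((μ[(fun ω' => (σ ω')^2)|mV]) ω)⁻¹

/-- `T := E[W | ℋ]`. -/
noncomputable def Tfun {m0 : MeasurableSpace Ω} (μ : Measure Ω)
    (mV mH : MeasurableSpace Ω) (σ : Ω → ℝ) : Ω → ℝ :=
  μ[Wfun μ mV σ|mH]

/-- `T• := E[T⁻¹ | 𝒱₋]`. -/
noncomputable def Tbul {m0 : MeasurableSpace Ω} (μ : Measure Ω)
    (mV mH mVm : MeasurableSpace Ω) (σ : Ω → ℝ) : Ω → ℝ :=
  μ[(fun ω => (Tfun μ mV mH σ ω)⁻¹)|mVm]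

/-- `ε := T⁻¹·W·σ + Q`. -/
noncomputable def epsFun {m0 : MeasurableSpace Ω} (μ : Measure Ω)
    (mV mH : MeasurableSpace Ω) (σ Q : Ω → ℝ) : Ω → ℝ :=
  fun ω => (Tfun μ mV mH σ ω)⁻¹ * Wfun μ mV σ ω * σ ω + Q ω

/-- `W• := (E[ε² | 𝒱₋])⁻¹`. -/
noncomputable def Wbul {m0 : MeasurableSpace Ω} (μ : Measure Ω)
    (mV mH mVm : MeasurableSpace Ω) (σ Q : Ω → ℝ) : Ω → ℝ :=
  fun ω => ((μ[(fun ω' => (epsFun μ mV mH σ Q ω')^2)|mVm]) ω)⁻¹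

/-- `Γ̃₄ = {A• − E[Q·A• | 𝒱₋]·(T•)⁻¹·T⁻¹·W·σ : A• ℋ-measurable, E[A• | 𝒱₋] = 0 a.s.,
the element lying in L²}`. -/
def GammaTilde4 {m0 : MeasurableSpace Ω} (μ : Measure Ω)
    (mV mH mVm : MeasurableSpace Ω) (σ Q : Ω → ℝ) : Set (Ω → ℝ) :=
  {f | ∃ A : Ω → ℝ, StronglyMeasurable[mH] A ∧ μ[A|mVm] =ᵐ[μ] 0 ∧
    f = (fun ω => A ω - (μ[(fun ω' => Q ω' * A ω')|mVm]) ω *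
      (Tbul μ mV mH mVm σ ω)⁻¹ * (Tfun μ mV mH σ ω)⁻¹ * Wfun μ mV σ ω * σ ω) ∧
    MemLp f 2 μ}

/-- The candidate projection `E[h | ℋ] − E[h | 𝒱₋] − E[hQ | 𝒱₋]·W•·ε`. -/
noncomputable def projGamma4 {m0 : MeasurableSpace Ω} (μ : Measure Ω)
    (mV mH mVm : MeasurableSpace Ω) (σ Q h : Ω → ℝ) : Ω → ℝ :=
  fun ω => (μ[h|mH]) ω - (μ[h|mVm]) ω -
    (μ[(fun ω' => h ω' * Q ω')|mVm]) ω * Wbul μ mV mH mVm σ Q ω * epsFun μ mV mH σ Q ω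

section CondExp

variable {m m0 : MeasurableSpace Ω} {μ : Measure Ω}

theorem condExp_mul_eq_zero_of_condExp_eq_zero {φ ψ : Ω → ℝ} (hφ : StronglyMeasurable[m] φ)
    (hφψ : Integrable (φ * ψ) μ) (hψ : Integrable ψ μ) (h : μ[ψ|m] =ᵐ[μ] 0) :
    μ[φ * ψ|m] =ᵐ[μ] 0 := by
  filter_upwards [condExp_mul_of_stronglyMeasurable_left hφ hφψ hψ, h] with ω h₁ h₂
  simp [h₁, h₂]

theorem condExp_eq_zero_of_le {m' : MeasurableSpace Ω} (hm' : m' ≤ m) (hm : m ≤ m0)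
    [SigmaFinite (μ.trim hm)] {f : Ω → ℝ} (h : μ[f|m] =ᵐ[μ] 0) : μ[f|m'] =ᵐ[μ] 0 :=
  calc μ[f|m'] =ᵐ[μ] μ[μ[f|m]|m'] := (condExp_condExp_of_le hm' hm).symm
    _ =ᵐ[μ] μ[0|m'] := condExp_congr_ae h
    _ = 0 := condExp_zero

theorem condExp_mul_eq_zero_of_le {m' : MeasurableSpace Ω} (hm' : m' ≤ m) (hm : m ≤ m0)
    [SigmaFinite (μ.trim hm)] {φ ψ : Ω → ℝ} (hφ : StronglyMeasurable[m] φ)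
    (hφψ : Integrable (φ * ψ) μ) (hψ : Integrable ψ μ) (h : μ[ψ|m] =ᵐ[μ] 0) :
    μ[φ * ψ|m'] =ᵐ[μ] 0 :=
  condExp_eq_zero_of_le hm' hm (condExp_mul_eq_zero_of_condExp_eq_zero hφ hφψ hψ h)

theorem condExp_sub_condExp_eq_zero (hm : m ≤ m0) [SigmaFinite (μ.trim hm)] {f : Ω → ℝ}
    (hf : Integrable f μ) : μ[f - μ[f|m]|m] =ᵐ[μ] 0 := by
  filter_upwards [condExp_sub hf (integrable_condExp (m := m) (f := f)) m] with ω h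
  rw [h, condExp_of_stronglyMeasurable hm stronglyMeasurable_condExp integrable_condExp]
  simp

theorem condExp_mul_condExp_of_le {m' : MeasurableSpace Ω} (hm' : m' ≤ m) (hm : m ≤ m0)
    [SigmaFinite (μ.trim hm)] {φ f : Ω → ℝ} (hφ : StronglyMeasurable[m] φ)
    (hφf : Integrable (φ * f) μ) (hf : Integrable f μ) :
    μ[φ * μ[f|m]|m'] =ᵐ[μ] μ[φ * f|m'] :=
  calc μ[φ * μ[f|m]|m'] =ᵐ[μ] μ[μ[φ * f|m]|m'] :=
        condExp_congr_ae (condExp_mul_of_stronglyMeasurable_left hφ hφf hf).symm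
    _ =ᵐ[μ] μ[φ * f|m'] := condExp_condExp_of_le hm' hm

theorem integral_mul_eq_zero_of_condExp_eq_zero (hm : m ≤ m0) [SigmaFinite (μ.trim hm)]
    {φ ψ : Ω → ℝ} (hφ : StronglyMeasurable[m] φ) (hφψ : Integrable (φ * ψ) μ)
    (hψ : Integrable ψ μ) (h : μ[ψ|m] =ᵐ[μ] 0) : ∫ ω, φ ω * ψ ω ∂μ = 0 :=
  calc ∫ ω, φ ω * ψ ω ∂μ = ∫ ω, μ[φ * ψ|m] ω ∂μ := (integral_condExp hm).symm
    _ = 0 := by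
      rw [integral_congr_ae (condExp_mul_eq_zero_of_condExp_eq_zero hφ hφψ hψ h)]
      simp

theorem integral_sub_sq_of_integral_mul_eq_zero {a b : Ω → ℝ} (ha : MemLp a 2 μ)
    (hb : MemLp b 2 μ) (h : ∫ ω, a ω * b ω ∂μ = 0) :
    ∫ ω, (a ω - b ω) ^ 2 ∂μ = ∫ ω, a ω ^ 2 ∂μ + ∫ ω, b ω ^ 2 ∂μ := by
  have hsq : Integrable (fun ω => a ω ^ 2 + b ω ^ 2) μ := ha.integrable_sq.add hb.integrable_sq
  have hab : Integrable (fun ω => 2 * (a ω * b ω)) μ := (ha.integrable_mul hb).const_mul 2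
  calc ∫ ω, (a ω - b ω) ^ 2 ∂μ = ∫ ω, (a ω ^ 2 + b ω ^ 2 - 2 * (a ω * b ω)) ∂μ := by
        congr 1; ext ω; ring
    _ = ∫ ω, a ω ^ 2 ∂μ + ∫ ω, b ω ^ 2 ∂μ := by
      rw [integral_sub hsq hab,
        integral_add ha.integrable_sq hb.integrable_sq, integral_const_mul, h]
      ring

theorem memLp_two_of_setIntegral_sq_le {u : Ω → ℝ} (hu : AEStronglyMeasurable u μ)
    {S : ℕ → Set Ω} (hS : Monotone S) (hS_univ : ⋃ n, S n = Set.univ)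
    (hint : ∀ n, IntegrableOn (fun ω => u ω ^ 2) (S n) μ) {K : ℝ}
    (hK : ∀ n, ∫ ω in S n, u ω ^ 2 ∂μ ≤ K) : MemLp u 2 μ := by
  refine (memLp_two_iff_integrable_sq hu).2 ⟨hu.pow 2, ?_⟩
  have hsup : ∫⁻ ω, ‖u ω ^ 2‖ₑ ∂μ = ⨆ n, ∫⁻ ω in S n, ‖u ω ^ 2‖ₑ ∂μ := by
    rw [← setLIntegral_iUnion_of_directed _ hS.directed_le, hS_univ, Measure.restrict_univ]
  rw [HasFiniteIntegral, hsup]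
  refine (iSup_le fun n => ?_).trans_lt (ENNReal.ofReal_lt_top (r := K))
  rw [← ofReal_integral_norm_eq_lintegral_enorm (hint n)]
  exact ENNReal.ofReal_le_ofReal (by simpa using hK n)

theorem memLp_two_of_memLp_sub_mul [IsFiniteMeasure μ] (hm : m ≤ m0) {A c s : Ω → ℝ}
    (hA : StronglyMeasurable[m] A) (hc : StronglyMeasurable[m] c) (hs : MemLp s 2 μ)
    (hsm : μ[s|m] =ᵐ[μ] 0) (hf : MemLp (A - c * s) 2 μ) :
    MemLp A 2 μ ∧ MemLp (c * s) 2 μ := by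
  set S : ℕ → Set Ω := fun n => {ω | |c ω| ≤ n}
  have hSm : ∀ n, MeasurableSet[m] (S n) := fun _ =>
    hc.norm.measurable measurableSet_Iic
  have hcs_S : ∀ n, MemLp (c * s) 2 (μ.restrict (S n)) := fun n =>
    ((hs.restrict _).const_mul n).of_le ((hc.mono hm).aestronglyMeasurable.mul hs.1).restrict
      ((ae_restrict_iff' (hm _ (hSm n))).2 (ae_of_all _ fun ω hω => by
        simpa [abs_mul] using mul_le_mul_of_nonneg_right hω (abs_nonneg (s ω))))
  have hA_S : ∀ n, MemLp A 2 (μ.restrict (S n)) := fun n => by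
    simpa using (hf.restrict (S n)).add (hcs_S n)
  have hcross : ∀ n, ∫ ω in S n, A ω * (c * s) ω ∂μ = 0 := fun n => by
    have hint : Integrable ((S n).indicator (A * c) * s) μ := by
      refine ((integrable_indicator_iff (hm _ (hSm n))).2
        ((hA_S n).integrable_mul (hcs_S n))).congr (ae_of_all _ fun ω => ?_)
      by_cases hω : ω ∈ S n <;> simp [hω, mul_assoc]
    rw [← integral_indicator (hm _ (hSm n))]
    refine (integral_congr_ae (ae_of_all _ fun ω => ?_)).trans
      (integral_mul_eq_zero_of_condExp_eq_zero hm ((hA.mul hc).indicator (hSm n)) hint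
        (hs.integrable one_le_two) hsm)
    by_cases hω : ω ∈ S n <;> simp [hω, mul_assoc]
  have hbound : ∀ n, ∫ ω in S n, (c * s) ω ^ 2 ∂μ ≤ ∫ ω, (A - c * s) ω ^ 2 ∂μ := fun n =>
    calc ∫ ω in S n, (c * s) ω ^ 2 ∂μ
        ≤ ∫ ω in S n, A ω ^ 2 ∂μ + ∫ ω in S n, (c * s) ω ^ 2 ∂μ :=
          le_add_of_nonneg_left (integral_nonneg fun ω => sq_nonneg _)
      _ = ∫ ω in S n, (A - c * s) ω ^ 2 ∂μ :=
          (integral_sub_sq_of_integral_mul_eq_zero (hA_S n) (hcs_S n) (hcross n)).symm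
      _ ≤ ∫ ω, (A - c * s) ω ^ 2 ∂μ :=
          setIntegral_le_integral hf.integrable_sq (ae_of_all _ fun ω => sq_nonneg _)
  have hcs : MemLp (c * s) 2 μ :=
    memLp_two_of_setIntegral_sq_le ((hc.mono hm).aestronglyMeasurable.mul hs.1)
      (fun a b hab ω (hω : |c ω| ≤ a) => hω.trans (Nat.cast_le.2 hab))
      (Set.iUnion_eq_univ_iff.2 fun ω => exists_nat_ge |c ω|)
      (fun n => (hcs_S n).integrable_sq) hbound
  exact ⟨by simpa using hf.add hcs, hcs⟩

end CondExp

noncomputable def gammaCoeff {m0 : MeasurableSpace Ω} (μ : Measure Ω) (mVm : MeasurableSpace Ω)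
    (Q τ A : Ω → ℝ) : Ω → ℝ :=
  μ[Q * A|mVm] * τ⁻¹

def gammaSet {m0 : MeasurableSpace Ω} (μ : Measure Ω) (mVm mH : MeasurableSpace Ω)
    (s Q τ : Ω → ℝ) : Set (Ω → ℝ) :=
  {f | ∃ A : Ω → ℝ, StronglyMeasurable[mH] A ∧ μ[A|mVm] =ᵐ[μ] 0 ∧
    f = A - gammaCoeff μ mVm Q τ A * s ∧ MemLp f 2 μ}

noncomputable def projCoeff {m0 : MeasurableSpace Ω} (μ : Measure Ω) (mVm : MeasurableSpace Ω)
    (s Q h : Ω → ℝ) : Ω → ℝ :=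
  μ[h * Q|mVm] * (μ[(s + Q) ^ 2|mVm])⁻¹

noncomputable def projGamma {m0 : MeasurableSpace Ω} (μ : Measure Ω)
    (mVm mH : MeasurableSpace Ω) (s Q h : Ω → ℝ) : Ω → ℝ :=
  μ[h|mH] - μ[h|mVm] - projCoeff μ mVm s Q h * (s + Q)

noncomputable def projGammaA {m0 : MeasurableSpace Ω} (μ : Measure Ω)
    (mVm mH : MeasurableSpace Ω) (s Q h : Ω → ℝ) : Ω → ℝ :=
  μ[h|mH] - μ[h|mVm] - projCoeff μ mVm s Q h * Q

section Projection

variable {mVm mH mV m0 : MeasurableSpace Ω} {μ : Measure Ω} {s Q τ h : Ω → ℝ}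

theorem stronglyMeasurable_gammaCoeff (hτ : StronglyMeasurable[mVm] τ) (A : Ω → ℝ) :
    StronglyMeasurable[mVm] (gammaCoeff μ mVm Q τ A) :=
  (stronglyMeasurable_condExp.measurable.mul hτ.measurable.inv).stronglyMeasurable

theorem stronglyMeasurable_projCoeff (h : Ω → ℝ) :
    StronglyMeasurable[mVm] (projCoeff μ mVm s Q h) :=
  (stronglyMeasurable_condExp.measurable.mul
    stronglyMeasurable_condExp.measurable.inv).stronglyMeasurable

theorem memLp_projCoeff_mul_add (hh2 : MemLp h 2 μ)
    (hproj : MemLp (projGamma μ mVm mH s Q h) 2 μ) :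
    MemLp (projCoeff μ mVm s Q h * (s + Q)) 2 μ := by
  convert ((hh2.condExp (m := mH) one_le_two).sub (hh2.condExp (m := mVm) one_le_two)).sub hproj
    using 1
  simp only [projGamma]
  ring

variable [IsFiniteMeasure μ]

theorem exists_memLp_of_mem_gammaSet (hVmH : mVm ≤ mH) (hH0 : mH ≤ m0) (hs : MemLp s 2 μ)
    (hsH : μ[s|mH] =ᵐ[μ] 0) (hτm : StronglyMeasurable[mVm] τ) {f : Ω → ℝ}
    (hf : f ∈ gammaSet μ mVm mH s Q τ) :
    ∃ A, StronglyMeasurable[mH] A ∧ μ[A|mVm] =ᵐ[μ] 0 ∧ MemLp A 2 μ ∧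
      MemLp (gammaCoeff μ mVm Q τ A * s) 2 μ ∧ f = A - gammaCoeff μ mVm Q τ A * s := by
  obtain ⟨A, hA, hAm, rfl, hf2⟩ := hf
  obtain ⟨hA2, hcs2⟩ := memLp_two_of_memLp_sub_mul hH0 hA
    ((stronglyMeasurable_gammaCoeff hτm A).mono hVmH) hs hsH hf2
  exact ⟨A, hA, hAm, hA2, hcs2, rfl⟩

theorem condExp_eq_zero_of_mem_gammaSet (hVmH : mVm ≤ mH) (hH0 : mH ≤ m0) (hs : MemLp s 2 μ)
    (hsH : μ[s|mH] =ᵐ[μ] 0) (hτm : StronglyMeasurable[mVm] τ) {f : Ω → ℝ}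
    (hf : f ∈ gammaSet μ mVm mH s Q τ) : μ[f|mVm] =ᵐ[μ] 0 := by
  obtain ⟨A, -, hAm, hA2, hcs2, rfl⟩ := exists_memLp_of_mem_gammaSet hVmH hH0 hs hsH hτm hf
  have hcs : μ[gammaCoeff μ mVm Q τ A * s|mVm] =ᵐ[μ] 0 :=
    condExp_mul_eq_zero_of_condExp_eq_zero (stronglyMeasurable_gammaCoeff hτm A)
      (hcs2.integrable one_le_two) (hs.integrable one_le_two) (condExp_eq_zero_of_le hVmH hH0 hsH)
  filter_upwards [condExp_sub (hA2.integrable one_le_two) (hcs2.integrable one_le_two) mVm, hAm,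
    hcs] with ω h₁ h₂ h₃
  simp [h₁, h₂, h₃]

theorem integral_mul_eq_zero_of_mem_gammaSet (hVmH : mVm ≤ mH) (hH0 : mH ≤ m0)
    (hs : MemLp s 2 μ) (hsH : μ[s|mH] =ᵐ[μ] 0) (hτm : StronglyMeasurable[mVm] τ) {g f : Ω → ℝ}
    (hg : StronglyMeasurable[mVm] g) (hg2 : MemLp g 2 μ) (hf : f ∈ gammaSet μ mVm mH s Q τ) :
    ∫ ω, g ω * f ω ∂μ = 0 := by
  have hf2 : MemLp f 2 μ := by
    obtain ⟨-, -, -, -, hf2⟩ := hf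
    exact hf2
  exact integral_mul_eq_zero_of_condExp_eq_zero (hVmH.trans hH0) hg (hg2.integrable_mul hf2)
    (hf2.integrable one_le_two) (condExp_eq_zero_of_mem_gammaSet hVmH hH0 hs hsH hτm hf)

theorem condExp_add_mul_self_eq (hVmH : mVm ≤ mH) (hH0 : mH ≤ m0) (hs : MemLp s 2 μ)
    (hsH : μ[s|mH] =ᵐ[μ] 0) (hQ : StronglyMeasurable[mH] Q) (hQ2 : MemLp Q 2 μ) :
    μ[(s + Q) * s|mVm] =ᵐ[μ] μ[s ^ 2|mVm] := by
  have hQs : μ[Q * s|mVm] =ᵐ[μ] 0 := condExp_mul_eq_zero_of_le hVmH hH0 hQ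
    (hQ2.integrable_mul hs) (hs.integrable one_le_two) hsH
  have hs2 : Integrable (s ^ 2) μ := hs.integrable_sq
  rw [show (s + Q) * s = s ^ 2 + Q * s by ring]
  filter_upwards [condExp_add hs2 (hQ2.integrable_mul hs) mVm, hQs] with ω h₁ h₂
  simp [h₁, h₂]

theorem condExp_add_sq_eq (hVmH : mVm ≤ mH) (hH0 : mH ≤ m0) (hs : MemLp s 2 μ)
    (hsH : μ[s|mH] =ᵐ[μ] 0) (hQ : StronglyMeasurable[mH] Q) (hQ2 : MemLp Q 2 μ) :
    μ[(s + Q) ^ 2|mVm] =ᵐ[μ] μ[s ^ 2|mVm] + μ[Q ^ 2|mVm] := by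
  have hQs1 : Integrable (Q * s) μ := hQ2.integrable_mul hs
  have hQ2' : Integrable (Q ^ 2) μ := hQ2.integrable_sq
  rw [show (s + Q) ^ 2 = (s + Q) * s + (Q * s + Q ^ 2) by ring]
  filter_upwards [condExp_add ((hs.add hQ2).integrable_mul hs) (hQs1.add hQ2') mVm,
    condExp_add hQs1 hQ2' mVm,
    condExp_mul_eq_zero_of_le hVmH hH0 hQ hQs1 (hs.integrable one_le_two) hsH,
    condExp_add_mul_self_eq hVmH hH0 hs hsH hQ hQ2] with ω h₁ h₂ h₃ h₄
  simp [h₁, h₂, h₃, h₄]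

theorem condExp_add_mul_eq_zero_of_mem_gammaSet (hVmH : mVm ≤ mH) (hH0 : mH ≤ m0)
    (hs : MemLp s 2 μ) (hsH : μ[s|mH] =ᵐ[μ] 0) (hQ : StronglyMeasurable[mH] Q)
    (hQ2 : MemLp Q 2 μ) (hτm : StronglyMeasurable[mVm] τ) (hτ : μ[s ^ 2|mVm] =ᵐ[μ] τ)
    (hτ0 : ∀ᵐ ω ∂μ, τ ω ≠ 0) {f : Ω → ℝ} (hf : f ∈ gammaSet μ mVm mH s Q τ) :
    μ[(s + Q) * f|mVm] =ᵐ[μ] 0 := by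
  obtain ⟨A, hA, -, hA2, hcs2, rfl⟩ := exists_memLp_of_mem_gammaSet hVmH hH0 hs hsH hτm hf
  set c := gammaCoeff μ mVm Q τ A
  have hAs : Integrable (A * s) μ := hA2.integrable_mul hs
  have hQA : Integrable (Q * A) μ := hQ2.integrable_mul hA2
  have hcss : Integrable (c * ((s + Q) * s)) μ := by
    rw [show c * ((s + Q) * s) = c * s * (s + Q) by ring]
    exact hcs2.integrable_mul (hs.add hQ2)
  have hc_out : μ[c * ((s + Q) * s)|mVm] =ᵐ[μ] c * μ[(s + Q) * s|mVm] :=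
    condExp_mul_of_stronglyMeasurable_left (stronglyMeasurable_gammaCoeff hτm A) hcss
      ((hs.add hQ2).integrable_mul hs)
  rw [show (s + Q) * (A - c * s) = A * s + Q * A - c * ((s + Q) * s) by ring]
  filter_upwards [condExp_sub (hAs.add hQA) hcss mVm, condExp_add hAs hQA mVm,
    condExp_mul_eq_zero_of_le hVmH hH0 hA hAs (hs.integrable one_le_two) hsH, hc_out,
    condExp_add_mul_self_eq hVmH hH0 hs hsH hQ hQ2, hτ, hτ0] with ω h₁ h₂ h₃ h₄ h₅ h₆ h₇
  rw [h₁, Pi.sub_apply, h₂, Pi.add_apply, h₃, h₄, Pi.mul_apply, h₅, h₆]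
  simp [c, gammaCoeff, h₇]

theorem integral_sub_condExp_mul_eq_zero_of_mem_gammaSet (hVmH : mVm ≤ mH) (hHV : mH ≤ mV)
    (hV : mV ≤ m0) (hs : MemLp s 2 μ) (hsV : μ[s|mV] =ᵐ[μ] 0) (hτm : StronglyMeasurable[mVm] τ)
    (hh : StronglyMeasurable[mV] h) (hh2 : MemLp h 2 μ) {f : Ω → ℝ}
    (hf : f ∈ gammaSet μ mVm mH s Q τ) :
    ∫ ω, (h - μ[h|mH]) ω * f ω ∂μ = 0 := by
  obtain ⟨A, hA, -, hA2, hcs2, rfl⟩ := exists_memLp_of_mem_gammaSet hVmH (hHV.trans hV) hs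
    (condExp_eq_zero_of_le hHV hV hsV) hτm hf
  set c := gammaCoeff μ mVm Q τ A
  set g := h - μ[h|mH]
  have hg2 : MemLp g 2 μ := hh2.sub (hh2.condExp one_le_two)
  have hgA : Integrable (A * g) μ := hA2.integrable_mul hg2
  have hgcs : Integrable (g * c * s) μ := by
    rw [mul_assoc]
    exact hg2.integrable_mul hcs2
  have hA_orth : ∫ ω, (A * g) ω ∂μ = 0 :=
    integral_mul_eq_zero_of_condExp_eq_zero (hHV.trans hV) hA hgA (hg2.integrable one_le_two)
      (condExp_sub_condExp_eq_zero (hHV.trans hV) (hh2.integrable one_le_two))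
  have hcs_orth : ∫ ω, (g * c * s) ω ∂μ = 0 :=
    integral_mul_eq_zero_of_condExp_eq_zero hV
      ((hh.sub (stronglyMeasurable_condExp.mono hHV)).mul
        ((stronglyMeasurable_gammaCoeff hτm A).mono (hVmH.trans hHV)))
      hgcs (hs.integrable one_le_two) hsV
  calc ∫ ω, g ω * (A - c * s) ω ∂μ = ∫ ω, (A * g) ω ∂μ - ∫ ω, (g * c * s) ω ∂μ := by
        rw [← integral_sub hgA hgcs]
        congr 1
        ext ω
        simp only [Pi.mul_apply, Pi.sub_apply]
        ring
    _ = 0 := by rw [hA_orth, hcs_orth, sub_zero]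

theorem integral_sub_projGamma_mul_eq_zero_of_mem_gammaSet (hVmH : mVm ≤ mH) (hHV : mH ≤ mV)
    (hV : mV ≤ m0) (hs : MemLp s 2 μ) (hsV : μ[s|mV] =ᵐ[μ] 0) (hQ : StronglyMeasurable[mH] Q)
    (hQ2 : MemLp Q 2 μ) (hτm : StronglyMeasurable[mVm] τ) (hτ : μ[s ^ 2|mVm] =ᵐ[μ] τ)
    (hτ0 : ∀ᵐ ω ∂μ, τ ω ≠ 0) (hh : StronglyMeasurable[mV] h) (hh2 : MemLp h 2 μ)
    (hproj : MemLp (projGamma μ mVm mH s Q h) 2 μ) {f : Ω → ℝ}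
    (hf : f ∈ gammaSet μ mVm mH s Q τ) :
    ∫ ω, (h ω - projGamma μ mVm mH s Q h ω) * f ω ∂μ = 0 := by
  have hH0 := hHV.trans hV
  have hsH := condExp_eq_zero_of_le hHV hV hsV
  have hf2 : MemLp f 2 μ := by
    obtain ⟨-, -, -, -, hf2⟩ := hf
    exact hf2
  set e := projCoeff μ mVm s Q h
  have i₁ : Integrable ((h - μ[h|mH]) * f) μ :=
    (hh2.sub (hh2.condExp one_le_two)).integrable_mul hf2
  have i₂ : Integrable (μ[h|mVm] * f) μ := (hh2.condExp one_le_two).integrable_mul hf2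
  have i₃ : Integrable (e * ((s + Q) * f)) μ := by
    rw [← mul_assoc]
    exact (memLp_projCoeff_mul_add hh2 hproj).integrable_mul hf2
  have h₁ : ∫ ω, ((h - μ[h|mH]) * f) ω ∂μ = 0 :=
    integral_sub_condExp_mul_eq_zero_of_mem_gammaSet hVmH hHV hV hs hsV hτm hh hh2 hf
  have h₂ : ∫ ω, (μ[h|mVm] * f) ω ∂μ = 0 :=
    integral_mul_eq_zero_of_mem_gammaSet hVmH hH0 hs hsH hτm stronglyMeasurable_condExp
      (hh2.condExp one_le_two) hf
  have h₃ : ∫ ω, (e * ((s + Q) * f)) ω ∂μ = 0 :=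
    integral_mul_eq_zero_of_condExp_eq_zero (hVmH.trans hH0) (stronglyMeasurable_projCoeff h) i₃
      ((hs.add hQ2).integrable_mul hf2)
      (condExp_add_mul_eq_zero_of_mem_gammaSet hVmH hH0 hs hsH hQ hQ2 hτm hτ hτ0 hf)
  calc ∫ ω, (h ω - projGamma μ mVm mH s Q h ω) * f ω ∂μ
      = ∫ ω, ((h - μ[h|mH]) * f + (μ[h|mVm] * f + e * ((s + Q) * f))) ω ∂μ := by
        congr 1
        ext ω
        simp only [projGamma, e, Pi.add_apply, Pi.mul_apply, Pi.sub_apply]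
        ring
    _ = 0 := by rw [integral_add' i₁ (i₂.add i₃), integral_add' i₂ i₃, h₁, h₂, h₃]; simp

theorem memLp_projCoeff_mul (hVmH : mVm ≤ mH) (hH0 : mH ≤ m0) (hs : MemLp s 2 μ)
    (hsH : μ[s|mH] =ᵐ[μ] 0) (hQ : StronglyMeasurable[mH] Q) (hh2 : MemLp h 2 μ)
    (hproj : MemLp (projGamma μ mVm mH s Q h) 2 μ) :
    MemLp (projCoeff μ mVm s Q h * Q) 2 μ := by
  have he := (stronglyMeasurable_projCoeff (μ := μ) (s := s) (Q := Q) h).mono hVmH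
  refine (memLp_two_of_memLp_sub_mul hH0 (he.mul hQ) he.neg hs hsH ?_).1
  convert memLp_projCoeff_mul_add hh2 hproj using 1
  ring

theorem condExp_projGammaA_eq_zero (hVmH : mVm ≤ mH) (hH0 : mH ≤ m0) (hQ2 : MemLp Q 2 μ)
    (hQVm : μ[Q|mVm] =ᵐ[μ] 0)
    (heQ : Integrable (projCoeff μ mVm s Q h * Q) μ) :
    μ[projGammaA μ mVm mH s Q h|mVm] =ᵐ[μ] 0 := by
  have i₁ : Integrable μ[h|mH] μ := integrable_condExp
  have i₂ : Integrable μ[h|mVm] μ := integrable_condExp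
  filter_upwards [condExp_sub (i₁.sub i₂) heQ mVm, condExp_sub i₁ i₂ mVm,
    condExp_condExp_of_le (f := h) hVmH hH0,
    condExp_mul_eq_zero_of_condExp_eq_zero (stronglyMeasurable_projCoeff h) heQ
      (hQ2.integrable one_le_two) hQVm] with ω h₁ h₂ h₃ h₄
  rw [projGammaA, h₁, Pi.sub_apply, h₂, Pi.sub_apply, h₃, h₄,
    condExp_of_stronglyMeasurable (hVmH.trans hH0) stronglyMeasurable_condExp integrable_condExp]
  simp

theorem condExp_mul_projGammaA_eq (hVmH : mVm ≤ mH) (hH0 : mH ≤ m0)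
    (hQ : StronglyMeasurable[mH] Q) (hQ2 : MemLp Q 2 μ) (hQVm : μ[Q|mVm] =ᵐ[μ] 0)
    (hh2 : MemLp h 2 μ) (heQ : MemLp (projCoeff μ mVm s Q h * Q) 2 μ) :
    μ[Q * projGammaA μ mVm mH s Q h|mVm] =ᵐ[μ]
      μ[h * Q|mVm] - projCoeff μ mVm s Q h * μ[Q ^ 2|mVm] := by
  set e := projCoeff μ mVm s Q h
  have i₁ : Integrable (Q * μ[h|mH]) μ := hQ2.integrable_mul (hh2.condExp one_le_two)
  have i₂ : Integrable (μ[h|mVm] * Q) μ := (hh2.condExp one_le_two).integrable_mul hQ2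
  have i₃ : Integrable (e * Q ^ 2) μ := by
    rw [pow_two, ← mul_assoc]
    exact heQ.integrable_mul hQ2
  have hQh : μ[Q * μ[h|mH]|mVm] =ᵐ[μ] μ[h * Q|mVm] := by
    rw [mul_comm h Q]
    exact condExp_mul_condExp_of_le hVmH hH0 hQ (hQ2.integrable_mul hh2)
      (hh2.integrable one_le_two)
  have he_out : μ[e * Q ^ 2|mVm] =ᵐ[μ] e * μ[Q ^ 2|mVm] :=
    condExp_mul_of_stronglyMeasurable_left (stronglyMeasurable_projCoeff h) i₃ hQ2.integrable_sq
  rw [show Q * projGammaA μ mVm mH s Q h = Q * μ[h|mH] - μ[h|mVm] * Q - e * Q ^ 2 by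
    simp only [projGammaA, e]; ring]
  filter_upwards [condExp_sub (i₁.sub i₂) i₃ mVm, condExp_sub i₁ i₂ mVm, hQh,
    condExp_mul_eq_zero_of_condExp_eq_zero stronglyMeasurable_condExp i₂
      (hQ2.integrable one_le_two) hQVm, he_out] with ω h₁ h₂ h₃ h₄ h₅
  rw [h₁, Pi.sub_apply, h₂, Pi.sub_apply, h₃, h₄, h₅]
  simp

theorem gammaCoeff_projGammaA_ae_eq (hVmH : mVm ≤ mH) (hH0 : mH ≤ m0) (hs : MemLp s 2 μ)
    (hsH : μ[s|mH] =ᵐ[μ] 0) (hQ : StronglyMeasurable[mH] Q) (hQ2 : MemLp Q 2 μ)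
    (hQVm : μ[Q|mVm] =ᵐ[μ] 0) (hτ : μ[s ^ 2|mVm] =ᵐ[μ] τ) (hτpos : ∀ᵐ ω ∂μ, 0 < τ ω)
    (hh2 : MemLp h 2 μ) (heQ : MemLp (projCoeff μ mVm s Q h * Q) 2 μ) :
    gammaCoeff μ mVm Q τ (projGammaA μ mVm mH s Q h) =ᵐ[μ] projCoeff μ mVm s Q h := by
  filter_upwards [condExp_mul_projGammaA_eq hVmH hH0 hQ hQ2 hQVm hh2 heQ,
    condExp_add_sq_eq hVmH hH0 hs hsH hQ hQ2, hτ, hτpos,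
    condExp_nonneg (m := mVm) (ae_of_all _ fun ω => sq_nonneg (Q ω))]
    with ω h₁ h₂ h₃ h₄ h₅
  have hpos : 0 < τ ω + μ[Q ^ 2|mVm] ω := add_pos_of_pos_of_nonneg h₄ h₅
  simp only [gammaCoeff, projCoeff, Pi.mul_apply, Pi.inv_apply, h₁, Pi.sub_apply, h₂,
    Pi.add_apply, h₃]
  field_simp
  ring

theorem exists_mem_gammaSet_ae_eq_projGamma (hVmH : mVm ≤ mH) (hH0 : mH ≤ m0)
    (hs : MemLp s 2 μ) (hsH : μ[s|mH] =ᵐ[μ] 0) (hQ : StronglyMeasurable[mH] Q)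
    (hQ2 : MemLp Q 2 μ) (hQVm : μ[Q|mVm] =ᵐ[μ] 0) (hτ : μ[s ^ 2|mVm] =ᵐ[μ] τ)
    (hτpos : ∀ᵐ ω ∂μ, 0 < τ ω) (hh2 : MemLp h 2 μ)
    (hproj : MemLp (projGamma μ mVm mH s Q h) 2 μ) :
    ∃ g ∈ gammaSet μ mVm mH s Q τ, projGamma μ mVm mH s Q h =ᵐ[μ] g := by
  have heQ := memLp_projCoeff_mul hVmH hH0 hs hsH hQ hh2 hproj
  have hA : StronglyMeasurable[mH] (projGammaA μ mVm mH s Q h) :=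
    (stronglyMeasurable_condExp.sub (stronglyMeasurable_condExp.mono hVmH)).sub
      (((stronglyMeasurable_projCoeff h).mono hVmH).mul hQ)
  have hproj_eq : projGamma μ mVm mH s Q h =ᵐ[μ] projGammaA μ mVm mH s Q h
      - gammaCoeff μ mVm Q τ (projGammaA μ mVm mH s Q h) * s := by
    filter_upwards [gammaCoeff_projGammaA_ae_eq hVmH hH0 hs hsH hQ hQ2 hQVm hτ hτpos hh2 heQ]
      with ω hω
    rw [Pi.sub_apply, Pi.mul_apply, hω]
    simp only [projGamma, projGammaA, Pi.sub_apply, Pi.mul_apply, Pi.add_apply]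
    ring
  exact ⟨_, ⟨_, hA, condExp_projGammaA_eq_zero hVmH hH0 hQ2 hQVm (heQ.integrable one_le_two),
    rfl, hproj.ae_eq hproj_eq⟩, hproj_eq⟩

end Projection

noncomputable def scaledSigma {m0 : MeasurableSpace Ω} (μ : Measure Ω)
    (mV mH : MeasurableSpace Ω) (σ : Ω → ℝ) : Ω → ℝ :=
  fun ω => (Tfun μ mV mH σ ω)⁻¹ * Wfun μ mV σ ω * σ ω

section ScaledSigma

variable {mVm mH mV m0 : MeasurableSpace Ω} {μ : Measure Ω} {σ Q : Ω → ℝ}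

theorem GammaTilde4_eq_gammaSet :
    GammaTilde4 μ mV mH mVm σ Q =
      gammaSet μ mVm mH (scaledSigma μ mV mH σ) Q (Tbul μ mV mH mVm σ) := by
  have key : ∀ A : Ω → ℝ, (fun ω => A ω - (μ[(fun ω' => Q ω' * A ω')|mVm]) ω *
      (Tbul μ mV mH mVm σ ω)⁻¹ * (Tfun μ mV mH σ ω)⁻¹ * Wfun μ mV σ ω * σ ω) =
      A - gammaCoeff μ mVm Q (Tbul μ mV mH mVm σ) A * scaledSigma μ mV mH σ := fun A => by
    ext ω
    simp only [gammaCoeff, scaledSigma, Pi.sub_apply, Pi.mul_apply, Pi.inv_apply,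
      show (fun ω' => Q ω' * A ω') = Q * A from rfl]
    ring
  ext f
  simp only [GammaTilde4, gammaSet, Set.mem_ofPred_eq, key]

theorem projGamma4_eq_projGamma (h : Ω → ℝ) :
    projGamma4 μ mV mH mVm σ Q h = projGamma μ mVm mH (scaledSigma μ mV mH σ) Q h :=
  rfl

theorem memLp_scaledSigma (hε : MemLp (epsFun μ mV mH σ Q) 2 μ) (hQ2 : MemLp Q 2 μ) :
    MemLp (scaledSigma μ mV mH σ) 2 μ := by
  convert hε.sub hQ2 using 1
  ext ω
  simp [epsFun, scaledSigma]

theorem measurable_Wfun : Measurable[mV] (Wfun μ mV σ) :=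
  stronglyMeasurable_condExp.measurable.inv

theorem condExp_scaledSigma_eq_zero (hHV : mH ≤ mV) (hσ : Integrable σ μ)
    (hs : Integrable (scaledSigma μ mV mH σ) μ) (hσV : μ[σ|mV] =ᵐ[μ] 0) :
    μ[scaledSigma μ mV mH σ|mV] =ᵐ[μ] 0 :=
  condExp_mul_eq_zero_of_condExp_eq_zero (φ := fun ω => (Tfun μ mV mH σ ω)⁻¹ * Wfun μ mV σ ω)
    (((stronglyMeasurable_condExp.mono hHV).measurable.inv.mul
      measurable_Wfun).stronglyMeasurable) hs hσ hσV

variable [IsFiniteMeasure μ]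

theorem condExp_scaledSigma_sq_eq_inv_Tfun (hHV : mH ≤ mV) (hV : mV ≤ m0)
    (hσ2 : MemLp σ 2 μ) (hσvar : ∀ᵐ ω ∂μ, 0 < (μ[(fun ω' => (σ ω')^2)|mV]) ω)
    (hWint : Integrable (Wfun μ mV σ) μ) (hTpos : ∀ᵐ ω ∂μ, 0 < Tfun μ mV mH σ ω)
    (hs2 : MemLp (scaledSigma μ mV mH σ) 2 μ) :
    μ[scaledSigma μ mV mH σ ^ 2|mH] =ᵐ[μ] fun ω => (Tfun μ mV mH σ ω)⁻¹ := by
  set T := Tfun μ mV mH σ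
  set W := Wfun μ mV σ
  have hsq : scaledSigma μ mV mH σ ^ 2 =
      (fun ω => ((T ω)⁻¹ * W ω) ^ 2) * fun ω => σ ω ^ 2 := by
    ext ω
    simp only [scaledSigma, Pi.pow_apply, Pi.mul_apply, T, W]
    ring
  have hV_eq : μ[scaledSigma μ mV mH σ ^ 2|mV] =ᵐ[μ] fun ω => (T ω)⁻¹ ^ 2 * W ω := by
    have hint : Integrable (scaledSigma μ mV mH σ ^ 2) μ := hs2.integrable_sq
    rw [hsq] at hint ⊢
    filter_upwards [condExp_mul_of_stronglyMeasurable_left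
      (f := fun ω => ((T ω)⁻¹ * W ω) ^ 2)
      (((stronglyMeasurable_condExp.mono hHV).measurable.inv.mul
        measurable_Wfun).pow_const 2).stronglyMeasurable hint hσ2.integrable_sq, hσvar]
      with ω h₁ h₂
    rw [h₁, Pi.mul_apply]
    simp only [W, Wfun]
    field_simp
  have hH_eq : μ[fun ω => (T ω)⁻¹ ^ 2 * W ω|mH] =ᵐ[μ] (fun ω => (T ω)⁻¹ ^ 2) * T :=
    condExp_mul_of_stronglyMeasurable_left
      (stronglyMeasurable_condExp.measurable.inv.pow_const 2).stronglyMeasurable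
      (integrable_condExp.congr hV_eq) hWint
  filter_upwards [condExp_condExp_of_le (f := scaledSigma μ mV mH σ ^ 2) hHV hV,
    condExp_congr_ae (m := mH) hV_eq, hH_eq, hTpos] with ω h₁ h₂ h₃ h₄
  rw [← h₁, h₂, h₃, Pi.mul_apply]
  field_simp

theorem condExp_scaledSigma_sq_eq_Tbul (hVmH : mVm ≤ mH) (hHV : mH ≤ mV) (hV : mV ≤ m0)
    (hσ2 : MemLp σ 2 μ) (hσvar : ∀ᵐ ω ∂μ, 0 < (μ[(fun ω' => (σ ω')^2)|mV]) ω)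
    (hWint : Integrable (Wfun μ mV σ) μ) (hTpos : ∀ᵐ ω ∂μ, 0 < Tfun μ mV mH σ ω)
    (hs2 : MemLp (scaledSigma μ mV mH σ) 2 μ) :
    μ[scaledSigma μ mV mH σ ^ 2|mVm] =ᵐ[μ] Tbul μ mV mH mVm σ :=
  (condExp_condExp_of_le hVmH (hHV.trans hV)).symm.trans
    (condExp_congr_ae (condExp_scaledSigma_sq_eq_inv_Tfun hHV hV hσ2 hσvar hWint hTpos hs2))

end ScaledSigma

theorem projection_onto_GammaTilde4_general
    {m0 : MeasurableSpace Ω} (μ : Measure Ω) [IsProbabilityMeasure μ]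
    (mVm mH mV : MeasurableSpace Ω)
    (hVmH : mVm ≤ mH) (hHV : mH ≤ mV) (hV : mV ≤ m0)
    (σ : Ω → ℝ) (hσ2 : MemLp σ 2 μ)
    (hσcond : μ[σ|mV] =ᵐ[μ] 0)
    (hσvar : ∀ᵐ ω ∂μ, 0 < (μ[(fun ω' => (σ ω')^2)|mV]) ω)
    (hWint : Integrable (Wfun μ mV σ) μ)
    (hTpos : ∀ᵐ ω ∂μ, 0 < Tfun μ mV mH σ ω)
    (hTbpos : ∀ᵐ ω ∂μ, 0 < Tbul μ mV mH mVm σ ω)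
    (Q : Ω → ℝ) (hQmeas : StronglyMeasurable[mH] Q) (hQ2 : MemLp Q 2 μ)
    (hQcond : μ[Q|mVm] =ᵐ[μ] 0)
    (hε2 : MemLp (epsFun μ mV mH σ Q) 2 μ)
    (h : Ω → ℝ) (hhmeas : StronglyMeasurable[mV] h) (hh2 : MemLp h 2 μ)
    (hprojL2 : MemLp (projGamma4 μ mV mH mVm σ Q h) 2 μ) :
    (∃ g ∈ GammaTilde4 μ mV mH mVm σ Q, projGamma4 μ mV mH mVm σ Q h =ᵐ[μ] g) ∧
    (∀ f ∈ GammaTilde4 μ mV mH mVm σ Q,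
      ∫ ω, (h ω - projGamma4 μ mV mH mVm σ Q h ω) * f ω ∂μ = 0) ∧
    (∀ h' : Ω → ℝ, StronglyMeasurable[mVm] h' → MemLp h' 2 μ →
      ∀ f ∈ GammaTilde4 μ mV mH mVm σ Q, ∫ ω, h' ω * f ω ∂μ = 0) := by
  have hH0 := hHV.trans hV
  have hs2 := memLp_scaledSigma hε2 hQ2
  have hsV := condExp_scaledSigma_eq_zero hHV (hσ2.integrable one_le_two)
    (hs2.integrable one_le_two) hσcond
  have hsH := condExp_eq_zero_of_le hHV hV hsV
  have hτ := condExp_scaledSigma_sq_eq_Tbul hVmH hHV hV hσ2 hσvar hWint hTpos hs2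
  have hτm : StronglyMeasurable[mVm] (Tbul μ mV mH mVm σ) := stronglyMeasurable_condExp
  rw [projGamma4_eq_projGamma] at hprojL2 ⊢
  rw [GammaTilde4_eq_gammaSet]
  exact ⟨exists_mem_gammaSet_ae_eq_projGamma hVmH hH0 hs2 hsH hQmeas hQ2 hQcond hτ hTbpos hh2
      hprojL2,
    fun f hf => integral_sub_projGamma_mul_eq_zero_of_mem_gammaSet hVmH hHV hV hs2 hsV hQmeas
      hQ2 hτm hτ (hTbpos.mono fun _ hω => hω.ne') hhmeas hh2 hprojL2 hf,
    fun g hg hg2 f hf => integral_mul_eq_zero_of_mem_gammaSet hVmH hH0 hs2 hsH hτm hg hg2 hf⟩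

/-- projection onto `Γ̃₄`.
(a) For any 𝒱-measurable `h ∈ L²(P)` with `hQ` integrable (all displayed quantities in
`L²`), `E[h | ℋ] − E[h | 𝒱₋] − E[hQ | 𝒱₋]·W•·ε` belongs to `Γ̃₄` and its difference from
`h` is orthogonal in `L²(P)` to every element of `Γ̃₄`; i.e. it is the orthogonal
projection of `h` onto `Γ̃₄`.
(b) If `h' ∈ L²(P)` is 𝒱₋-measurable, then `h'` is orthogonal to every element of `Γ̃₄`. -/
theorem projection_onto_GammaTilde4
    {m0 : MeasurableSpace Ω} (μ : Measure Ω) [IsProbabilityMeasure μ]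
    (mVm mH mV : MeasurableSpace Ω)
    (hVmH : mVm ≤ mH) (hHV : mH ≤ mV) (hV : mV ≤ m0)
    (σ : Ω → ℝ) (hσ2 : MemLp σ 2 μ)
    (hσcond : μ[σ|mV] =ᵐ[μ] 0)
    (hσvar : ∀ᵐ ω ∂μ, 0 < (μ[(fun ω' => (σ ω')^2)|mV]) ω)
    (hWint : Integrable (Wfun μ mV σ) μ)
    (hTpos : ∀ᵐ ω ∂μ, 0 < Tfun μ mV mH σ ω)
    (hTinvInt : Integrable (fun ω => (Tfun μ mV mH σ ω)⁻¹) μ)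
    (hTbpos : ∀ᵐ ω ∂μ, 0 < Tbul μ mV mH mVm σ ω)
    (Q : Ω → ℝ) (hQmeas : StronglyMeasurable[mH] Q) (hQ2 : MemLp Q 2 μ)
    (hQcond : μ[Q|mVm] =ᵐ[μ] 0)
    (hε2 : MemLp (epsFun μ mV mH σ Q) 2 μ)
    (hWbpos : ∀ᵐ ω ∂μ, 0 < (μ[(fun ω' => (epsFun μ mV mH σ Q ω')^2)|mVm]) ω)
    (h : Ω → ℝ) (hhmeas : StronglyMeasurable[mV] h) (hh2 : MemLp h 2 μ)
    (hhQInt : Integrable (fun ω => h ω * Q ω) μ)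
    (hprojL2 : MemLp (projGamma4 μ mV mH mVm σ Q h) 2 μ) :
    (∃ g ∈ GammaTilde4 μ mV mH mVm σ Q, projGamma4 μ mV mH mVm σ Q h =ᵐ[μ] g) ∧
    (∀ f ∈ GammaTilde4 μ mV mH mVm σ Q,
      ∫ ω, (h ω - projGamma4 μ mV mH mVm σ Q h ω) * f ω ∂μ = 0) ∧
    (∀ h' : Ω → ℝ, StronglyMeasurable[mVm] h' → MemLp h' 2 μ →
      ∀ f ∈ GammaTilde4 μ mV mH mVm σ Q, ∫ ω, h' ω * f ω ∂μ = 0) :=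
  projection_onto_GammaTilde4_general μ mVm mH mV hVmH hHV hV σ hσ2 hσcond hσvar hWint hTpos hTbpos
    Q hQmeas hQ2 hQcond hε2 h hhmeas hh2 hprojL2
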